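/- For Γ = ℤ and a single endomorphism α, an element ξ ∈ ℓ∞(ℤ, A) belongs to B = cl span{μ_n(a)} if and only if lim_{n→−∞} ‖ξ(n)‖ = 0 and for every ε > 0 there exists m ∈ ℤ such that ‖ξ(n) − α^{n−m}(ξ(m))‖ < ε for all n ≥ m. -/
import Mathlib


open scoped ENNReal

/-- For a single endomorphism `α` of `A` and `n ∈ ℤ`, the map `μ_n : A → ℓ∞(ℤ, A)`,
`(μ_n a)(m) = α^{m-n}(a)` for `m ≥ n` and `0` otherwise. -/
noncomputable def muZ {A : Type*} [NonUnitalCStarAlgebra A] (α : A →⋆ₙₐ[ℂ] A) (n : ℤ) (a : A) :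
    lp (fun _ : ℤ => A) ∞ :=
  ⟨fun m => if n ≤ m then (⇑α)^[(m - n).toNat] a else 0, memℓp_infty ⟨‖a‖, by
    rintro r ⟨m, rfl⟩
    dsimp only
    split_ifs
    · generalize (m - n).toNat = k
      induction k with
      | zero => simp
      | succ k ih =>
        rw [Function.iterate_succ_apply']
        exact (NonUnitalStarAlgHom.norm_apply_le α _).trans ih
    · simp⟩⟩

/-- `B = cl span {μ_n(a) : n ∈ ℤ, a ∈ A} ⊆ ℓ∞(ℤ, A)`. -/
noncomputable def BZ {A : Type*} [NonUnitalCStarAlgebra A] (α : A →⋆ₙₐ[ℂ] A) :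
    Set (lp (fun _ : ℤ => A) ∞) :=
  closure (Submodule.span ℂ {ξ : lp (fun _ : ℤ => A) ∞ | ∃ n a, ξ = muZ α n a} : Set _)

section Helpers
variable {A : Type*} [NonUnitalCStarAlgebra A] (α : A →⋆ₙₐ[ℂ] A)

lemma muZ_apply (n : ℤ) (a : A) (m : ℤ) :
    muZ α n a m = if n ≤ m then (⇑α)^[(m - n).toNat] a else 0 := rfl

lemma iterNormLe (k : ℕ) (a : A) : ‖(⇑α)^[k] a‖ ≤ ‖a‖ := by
  induction k with
  | zero => simp
  | succ k ih =>
    rw [Function.iterate_succ_apply']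
    exact (NonUnitalStarAlgHom.norm_apply_le α _).trans ih

lemma iterSub (k : ℕ) (a b : A) : (⇑α)^[k] (a - b) = (⇑α)^[k] a - (⇑α)^[k] b := by
  induction k with
  | zero => rfl
  | succ k ih => simp [Function.iterate_succ_apply, map_sub, ih]

lemma iterAdd (k : ℕ) (a b : A) : (⇑α)^[k] (a + b) = (⇑α)^[k] a + (⇑α)^[k] b := by
  induction k with
  | zero => rfl
  | succ k ih => simp [Function.iterate_succ_apply, map_add, ih]

lemma iterSmul (k : ℕ) (c : ℂ) (a : A) : (⇑α)^[k] (c • a) = c • (⇑α)^[k] a := by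
  induction k generalizing a with
  | zero => rfl
  | succ k ih => simp [Function.iterate_succ_apply, map_smul, ih]

lemma propShift {x : lp (fun _ : ℤ => A) ∞} {m1 m : ℤ} (h : m1 ≤ m)
    (e : ∀ n, m1 ≤ n → x n = (⇑α)^[(n - m1).toNat] (x m1)) :
    ∀ n, m ≤ n → x n = (⇑α)^[(n - m).toNat] (x m) := by
  intro n hn
  rw [e n (h.trans hn), e m h, ← Function.iterate_add_apply]
  congr 1
  omega

lemma span_struct {η : lp (fun _ : ℤ => A) ∞}
    (hη : η ∈ Submodule.span ℂ {ξ : lp (fun _ : ℤ => A) ∞ | ∃ n a, ξ = muZ α n a}) :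
    (∃ N : ℤ, ∀ n < N, η n = 0) ∧
    ∃ m : ℤ, ∀ n, m ≤ n → η n = (⇑α)^[(n - m).toNat] (η m) := by
  induction hη using Submodule.span_induction with
  | mem x hx =>
    obtain ⟨k, a, rfl⟩ := hx
    constructor
    · exact ⟨k, fun n hn => by rw [muZ_apply, if_neg (by omega)]⟩
    · refine ⟨k, fun n hn => ?_⟩
      rw [muZ_apply, muZ_apply, if_pos hn, if_pos le_rfl]
      simp
  | zero =>
    exact ⟨⟨0, fun n _ => by simp⟩, 0, fun n _ => by simp⟩
  | add x y hx hy ihx ihy =>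
    obtain ⟨⟨N1, h1⟩, m1, e1⟩ := ihx
    obtain ⟨⟨N2, h2⟩, m2, e2⟩ := ihy
    constructor
    · refine ⟨min N1 N2, fun n hn => ?_⟩
      rw [lp.coeFn_add, Pi.add_apply, h1 n (by omega), h2 n (by omega), add_zero]
    · refine ⟨max m1 m2, fun n hn => ?_⟩
      have E1 := propShift α (le_max_left m1 m2) e1
      have E2 := propShift α (le_max_right m1 m2) e2
      rw [lp.coeFn_add, Pi.add_apply, Pi.add_apply, E1 n hn, E2 n hn, iterAdd]
  | smul c x hx ihx =>
    obtain ⟨⟨N1, h1⟩, m1, e1⟩ := ihx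
    constructor
    · exact ⟨N1, fun n hn => by rw [lp.coeFn_smul, Pi.smul_apply, h1 n hn, smul_zero]⟩
    · exact ⟨m1, fun n hn => by
        rw [lp.coeFn_smul, Pi.smul_apply, Pi.smul_apply, e1 n hn, iterSmul]⟩

lemma delta_apply (n : ℤ) (a : A) (k : ℤ) :
    (muZ α n a - muZ α (n + 1) (α a)) k = if k = n then a else 0 := by
  rw [lp.coeFn_sub, Pi.sub_apply, muZ_apply, muZ_apply]
  rcases lt_trichotomy k n with h | h | h
  · rw [if_neg (by omega), if_neg (by omega), if_neg (by omega), sub_zero]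
  · subst h
    rw [if_pos le_rfl, if_neg (by omega), if_pos rfl]
    simp
  · rw [if_pos (by omega), if_pos (by omega), if_neg (by omega)]
    have : (k - n).toNat = (k - (n + 1)).toNat + 1 := by omega
    rw [this, Function.iterate_succ_apply, sub_self]

end Helpers

open Filter in
/-- For `Γ = ℤ` and a single endomorphism `α`, an element `ξ ∈ ℓ∞(ℤ, A)` lies in
`B = cl span {μ_n(a)}` iff `‖ξ(n)‖ → 0` as `n → -∞` and for every `ε > 0` there is
`m ∈ ℤ` with `‖ξ(n) - α^{n-m}(ξ(m))‖ < ε` for all `n ≥ m`. -/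
theorem mem_BZ_iff {A : Type*} [NonUnitalCStarAlgebra A] (α : A →⋆ₙₐ[ℂ] A)
    (ξ : lp (fun _ : ℤ => A) ∞) :
    ξ ∈ BZ α ↔
      Tendsto (fun n : ℤ => ‖ξ n‖) atBot (nhds 0) ∧
      ∀ ε : ℝ, 0 < ε → ∃ m : ℤ, ∀ n : ℤ, m ≤ n →
        ‖ξ n - (⇑α)^[(n - m).toNat] (ξ m)‖ < ε := by
  constructor
  · intro h
    unfold BZ at h
    rw [Metric.mem_closure_iff] at h
    have hb : ∀ (η : lp (fun _ : ℤ => A) ∞) (k : ℤ), ‖ξ k - η k‖ ≤ ‖ξ - η‖ := by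
      intro η k
      have := lp.norm_apply_le_norm (E := fun _ : ℤ => A) ENNReal.top_ne_zero (ξ - η) k
      rwa [lp.coeFn_sub, Pi.sub_apply] at this
    constructor
    · rw [Metric.tendsto_nhds]
      intro ε hε
      obtain ⟨η, hηs, hd⟩ := h (ε / 2) (by linarith)
      obtain ⟨⟨N, hN⟩, -⟩ := span_struct α hηs
      rw [eventually_atBot]
      refine ⟨N - 1, fun n hn => ?_⟩
      rw [dist_eq_norm] at hd
      rw [Real.dist_eq, sub_zero, abs_of_nonneg (norm_nonneg _)]
      calc ‖ξ n‖ = ‖ξ n - η n‖ := by rw [hN n (by omega), sub_zero]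
        _ ≤ ‖ξ - η‖ := hb η n
        _ < ε := by linarith
    · intro ε hε
      obtain ⟨η, hηs, hd⟩ := h (ε / 3) (by linarith)
      obtain ⟨-, m, hm⟩ := span_struct α hηs
      rw [dist_eq_norm] at hd
      refine ⟨m, fun n hn => ?_⟩
      have h2 : ‖η n - (⇑α)^[(n - m).toNat] (ξ m)‖ ≤ ‖ξ - η‖ := by
        rw [hm n hn, ← iterSub]
        calc ‖(⇑α)^[(n - m).toNat] (η m - ξ m)‖ ≤ ‖η m - ξ m‖ := iterNormLe α _ _
          _ = ‖ξ m - η m‖ := norm_sub_rev _ _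
          _ ≤ ‖ξ - η‖ := hb η m
      calc ‖ξ n - (⇑α)^[(n - m).toNat] (ξ m)‖
          = ‖(ξ n - η n) + (η n - (⇑α)^[(n - m).toNat] (ξ m))‖ := by
            rw [sub_add_sub_cancel]
        _ ≤ ‖ξ n - η n‖ + ‖η n - (⇑α)^[(n - m).toNat] (ξ m)‖ := norm_add_le _ _
        _ ≤ ‖ξ - η‖ + ‖ξ - η‖ := add_le_add (hb η n) h2
        _ < ε := by linarith
  · rintro ⟨h1, h2⟩
    unfold BZ
    rw [Metric.mem_closure_iff]
    intro ε hε
    obtain ⟨m, hm⟩ := h2 (ε / 2) (by linarith)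
    have h1' := Metric.tendsto_nhds.mp h1 (ε / 2) (by linarith)
    rw [eventually_atBot] at h1'
    obtain ⟨N0, hN0⟩ := h1'
    set N := min N0 m with hNdef
    have hN : ∀ n ≤ N, ‖ξ n‖ < ε / 2 := fun n hn => by
      have := hN0 n (le_trans hn (min_le_left _ _))
      rwa [Real.dist_eq, sub_zero, abs_of_nonneg (norm_nonneg _)] at this
    have key : ∀ d : ℕ, ∃ η : lp (fun _ : ℤ => A) ∞,
        η ∈ (Submodule.span ℂ {ξ : lp (fun _ : ℤ => A) ∞ | ∃ n a, ξ = muZ α n a} : Set _) ∧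
        (∀ k : ℤ, m - d ≤ k → ‖ξ k - η k‖ < ε / 2) ∧
        (∀ k : ℤ, k < m - d → η k = 0) := by
      intro d
      induction d with
      | zero =>
        refine ⟨muZ α m (ξ m), Submodule.subset_span ⟨m, ξ m, rfl⟩, fun k hk => ?_,
          fun k hk => ?_⟩
        · rw [muZ_apply, if_pos (by omega : m ≤ k)]
          exact hm k (by omega)
        · rw [muZ_apply, if_neg (by omega)]
      | succ d ih =>
        obtain ⟨η, hηs, hη1, hη2⟩ := ih
        set n0 : ℤ := m - (d : ℤ) - 1 with hn0
        refine ⟨η + (muZ α n0 (ξ n0) - muZ α (n0 + 1) (α (ξ n0))), ?_, ?_, ?_⟩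
        · exact Submodule.add_mem _ hηs (Submodule.sub_mem _
            (Submodule.subset_span ⟨n0, ξ n0, rfl⟩)
            (Submodule.subset_span ⟨n0 + 1, α (ξ n0), rfl⟩))
        · intro k hk
          rw [lp.coeFn_add, Pi.add_apply, delta_apply]
          rcases eq_or_ne k n0 with rfl | hne
          · rw [if_pos rfl, hη2 _ (by omega), zero_add]
            simpa using half_pos hε
          · rw [if_neg hne, add_zero]
            exact hη1 k (by omega)
        · intro k hk
          rw [lp.coeFn_add, Pi.add_apply, delta_apply, if_neg (by omega), add_zero]
          exact hη2 k (by omega)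
    obtain ⟨η, hηs, hη1, hη2⟩ := key (m - N).toNat
    have hNm : N ≤ m := min_le_right _ _
    refine ⟨η, hηs, ?_⟩
    rw [dist_eq_norm]
    have hball : ∀ k : ℤ, ‖(ξ - η) k‖ ≤ ε / 2 := by
      intro k
      rw [lp.coeFn_sub, Pi.sub_apply]
      rcases le_or_gt N k with hk | hk
      · exact (hη1 k (by omega)).le
      · rw [hη2 k (by omega), sub_zero]
        exact (hN k (by omega)).le
    calc ‖ξ - η‖ ≤ ε / 2 := lp.norm_le_of_forall_le (by linarith) hball
      _ < ε := by linarith
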